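/- arXiv:1706.07389 — 5 statements merged into one kernel-verified Lean document; each statement's English description precedes it below -/
import Mathlib

section
/- Every word over the vertex set of a simplicial graph is equivalent, under the equivalence relation generated by deleting adjacent equal letters and swapping adjacent letters joined by an edge, to a reduced word (a word in which whenever two occurrences of the same vertex appear, some vertex not adjacent to it lies strictly between them). -/
/-!
A word that is not reduced contains two occurrences of a letter `a` separated only by
neighbours of `a`. Commuting the first occurrence past them and deleting one of the two
now adjacent copies gives an equivalent, strictly shorter word, so induction on the length
ends at a reduced word.
-/

/-- One-step moves on words over the vertex set of a simplicial graph: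
deleting one of two adjacent equal letters, or swapping two adjacent letters
joined by an edge. -/
inductive WordStep {V : Type*} (G : SimpleGraph V) : List V → List V → Prop
  | del (l r : List V) (a : V) : WordStep G (l ++ a :: a :: r) (l ++ a :: r)
  | swap (l r : List V) (a b : V) (h : G.Adj a b) :
      WordStep G (l ++ a :: b :: r) (l ++ b :: a :: r)

/-- The equivalence relation on words generated by the moves. -/
def WordEquiv {V : Type*} (G : SimpleGraph V) : List V → List V → Prop :=
  Relation.EqvGen (WordStep G)

/-- A word is reduced if whenever two occurrences of the same vertex appear,
some vertex not adjacent to it lies strictly between them. -/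
def IsReducedWord {V : Type*} (G : SimpleGraph V) (w : List V) : Prop :=
  ∀ k l : Fin w.length, (k : ℕ) < (l : ℕ) → w.get k = w.get l →
    ∃ p : Fin w.length, (k : ℕ) < (p : ℕ) ∧ (p : ℕ) < (l : ℕ) ∧ ¬ G.Adj (w.get k) (w.get p)

namespace List

variable {α : Type*}

theorem eq_take_append_getElem_cons_append_getElem_cons (l : List α) {i j : ℕ} (hij : i < j)
    (hj : j < l.length) :
    l = l.take i ++ l[i] :: ((l.drop (i + 1)).take (j - (i + 1)) ++ l[j] :: l.drop (j + 1)) := by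
  have hdrop : (l.drop (i + 1)).drop (j - (i + 1)) = l[j] :: l.drop (j + 1) := by
    rw [drop_drop, show i + 1 + (j - (i + 1)) = j by omega, drop_eq_getElem_cons hj]
  rw [← hdrop, take_append_drop, ← drop_eq_getElem_cons (by omega), take_append_drop]

theorem exists_getElem_of_mem_take_drop {l : List α} {i j : ℕ} {b : α}
    (hb : b ∈ (l.drop (i + 1)).take (j - (i + 1))) :
    ∃ (p : ℕ) (hp : p < l.length), i < p ∧ p < j ∧ l[p] = b := by
  obtain ⟨q, hq, rfl⟩ := mem_iff_getElem.mp hb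
  simp only [length_take, length_drop, lt_min_iff] at hq
  exact ⟨i + 1 + q, by omega, by omega, by omega, by simp [getElem_take, getElem_drop]⟩

end List

section Words

variable {V : Type*} {G : SimpleGraph V}

theorem WordStep.wordEquiv {u v : List V} (h : WordStep G u v) : WordEquiv G u v :=
  Relation.EqvGen.rel _ _ h

theorem WordEquiv.refl (u : List V) : WordEquiv G u u :=
  Relation.EqvGen.refl u

theorem WordEquiv.trans {u v w : List V} (huv : WordEquiv G u v) (hvw : WordEquiv G v w) :
    WordEquiv G u w :=
  Relation.EqvGen.trans _ _ _ huv hvw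

theorem wordEquiv_append_cons_append_of_forall_adj {a : V} {m : List V}
    (hm : ∀ b ∈ m, G.Adj a b) (l r : List V) :
    WordEquiv G (l ++ a :: (m ++ r)) (l ++ (m ++ a :: r)) := by
  induction m generalizing l with
  | nil => exact WordEquiv.refl _
  | cons b m ih =>
    have hswap := (WordStep.swap l (m ++ r) a b (hm b List.mem_cons_self)).wordEquiv
    have hrest := ih (fun c hc => hm c (List.mem_cons_of_mem b hc)) (l ++ [b])
    simp only [List.append_assoc, List.cons_append, List.nil_append] at hrest
    exact hswap.trans hrest

theorem wordEquiv_cons_append_cons_of_forall_adj {a : V} {m : List V}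
    (hm : ∀ b ∈ m, G.Adj a b) (l r : List V) :
    WordEquiv G (l ++ a :: (m ++ a :: r)) (l ++ (m ++ a :: r)) := by
  have hdel := (WordStep.del (G := G) (l ++ m) r a).wordEquiv
  simp only [List.append_assoc] at hdel
  exact (wordEquiv_append_cons_append_of_forall_adj hm l (a :: r)).trans hdel

theorem exists_eq_cons_append_cons_of_not_isReducedWord {w : List V}
    (hw : ¬ IsReducedWord G w) :
    ∃ (l m r : List V) (a : V), w = l ++ a :: (m ++ a :: r) ∧ ∀ b ∈ m, G.Adj a b := by
  simp only [IsReducedWord, not_forall, not_exists, not_and, not_not] at hw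
  obtain ⟨⟨i, hi⟩, ⟨j, hj⟩, hij, heq, hadj⟩ := hw
  simp only [List.get_eq_getElem] at hij heq hadj
  have hsplit := w.eq_take_append_getElem_cons_append_getElem_cons hij hj
  rw [← heq] at hsplit
  refine ⟨_, _, _, w[i], hsplit, fun b hb => ?_⟩
  obtain ⟨p, hp, hip, hpj, rfl⟩ := List.exists_getElem_of_mem_take_drop hb
  exact hadj ⟨p, hp⟩ hip hpj

theorem exists_wordEquiv_length_lt_of_not_isReducedWord {w : List V}
    (hw : ¬ IsReducedWord G w) :
    ∃ w' : List V, WordEquiv G w w' ∧ w'.length < w.length := by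
  obtain ⟨l, m, r, a, rfl, hm⟩ := exists_eq_cons_append_cons_of_not_isReducedWord hw
  exact ⟨_, wordEquiv_cons_append_cons_of_forall_adj hm l r, by simp⟩

end Words

/-- Every word is equivalent to a reduced word. -/
theorem every_word_equiv_reduced {V : Type*} (G : SimpleGraph V) (w : List V) :
    ∃ w' : List V, WordEquiv G w w' ∧ IsReducedWord G w' := by
  induction h : w.length using Nat.strong_induction_on generalizing w with
  | _ n ih =>
    by_cases hw : IsReducedWord G w
    · exact ⟨w, WordEquiv.refl w, hw⟩
    · obtain ⟨u, hwu, hlt⟩ := exists_wordEquiv_length_lt_of_not_isReducedWord hw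
      obtain ⟨w', huw', hw'⟩ := ih _ (h ▸ hlt) u rfl
      exact ⟨w', hwu.trans huw', hw'⟩
end

section
/- If two reduced words w and w' over the vertex set of a simplicial graph are equivalent, then there is a unique permutation σ with w'_i = w_{σ(i)} for all i that additionally satisfies: whenever w_k = w_l with k < l, then σ⁻¹(k) < σ⁻¹(l) (i.e., σ preserves the relative order of equal letters). -/
/-!
Swaps of adjacent commuting letters permute the letters of a word, so the heart of the matter
is that equivalent reduced words differ by swaps alone. On swap classes consider the deletion
moves that remain available after swaps: delete the second of two equal letters `c` separated
only by neighbours of `c`. Such a configuration can be pulled back along any swap, and two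
such moves on the same word can be completed to a common result by at most one further move
each, so `Relation.church_rosser` applies without any termination argument. A reduced word
admits no such move anywhere in its swap class, hence two equivalent reduced words lie in the
same swap class. The permutation is then forced fibre by fibre: between the positions of a
letter in `w` and in `w'` there is exactly one order isomorphism.
-/

theorem IsReducedWord.of_cons {V : Type*} {G : SimpleGraph V} {x : V} {u : List V}
    (h : IsReducedWord G (x :: u)) : IsReducedWord G u := by
  intro k l hkl hkl'
  obtain ⟨p, hkp, hpl, hp⟩ := h k.succ l.succ (by simpa) (by simpa)
  obtain ⟨p, rfl⟩ := Fin.exists_succ_eq.2 (Fin.ne_zero_of_lt (a := k.succ) hkp)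
  exact ⟨p, by simpa using hkp, by simpa using hpl, by simpa using hp⟩

namespace WordEquiv

variable {V : Type*} {G : SimpleGraph V}

open Relation

inductive SwapStep (G : SimpleGraph V) : List V → List V → Prop
  | swap {a b : V} (r : List V) : G.Adj a b → SwapStep G (a :: b :: r) (b :: a :: r)
  | cons (x : V) {u v : List V} : SwapStep G u v → SwapStep G (x :: u) (x :: v)

def SwapEquiv (G : SimpleGraph V) : List V → List V → Prop :=
  ReflTransGen (SwapStep G)

/-- The first `c` of `u` is preceded only by neighbours of `c`, so it commutes to the front of
`u`; `v` is `u` without it. -/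
inductive Extract (G : SimpleGraph V) (c : V) : List V → List V → Prop
  | head (r : List V) : Extract G c (c :: r) r
  | cons {x : V} {u v : List V} : G.Adj c x → Extract G c u v → Extract G c (x :: u) (x :: v)

/-- A deletion move up to swaps: two equal letters `c` of `u` separated only by neighbours of `c`
become adjacent after swaps, and `v` is `u` with the second one deleted. -/
inductive Cancel (G : SimpleGraph V) : List V → List V → Prop
  | head {c : V} {u v : List V} : Extract G c u v → Cancel G (c :: u) (c :: v)
  | cons (x : V) {u v : List V} : Cancel G u v → Cancel G (x :: u) (x :: v)

namespace SwapStep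

theorem symm {u v : List V} (h : SwapStep G u v) : SwapStep G v u := by
  induction h with
  | swap r hab => exact swap r hab.symm
  | cons x _ ih => exact cons x ih

instance : Std.Symm (SwapStep G) := ⟨fun _ _ => symm⟩

theorem append_left {u v : List V} (h : SwapStep G u v) (l : List V) :
    SwapStep G (l ++ u) (l ++ v) := by
  induction l with
  | nil => exact h
  | cons x l ih => exact cons x ih

theorem perm {u v : List V} (h : SwapStep G u v) : u.Perm v := by
  induction h with
  | swap r _ => exact List.Perm.swap _ _ r
  | cons x _ ih => exact ih.cons x

end SwapStep

namespace SwapEquiv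

theorem symm {u v : List V} (h : SwapEquiv G u v) : SwapEquiv G v u :=
  Std.Symm.symm (r := ReflTransGen (SwapStep G)) _ _ h

theorem equivalence : Equivalence (SwapEquiv G) :=
  ⟨fun _ => .refl, symm, .trans⟩

theorem cons (x : V) {u v : List V} (h : SwapEquiv G u v) : SwapEquiv G (x :: u) (x :: v) :=
  ReflTransGen.lift (x :: ·) (fun _ _ => SwapStep.cons x) _ _ h

theorem perm {u v : List V} (h : SwapEquiv G u v) : u.Perm v := by
  induction h with
  | refl => rfl
  | tail _ hstep ih => exact ih.trans hstep.perm

end SwapEquiv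

namespace Extract

theorem right_unique {c : V} {u v₁ v₂ : List V} (h₁ : Extract G c u v₁) (h₂ : Extract G c u v₂) :
    v₁ = v₂ := by
  induction h₁ generalizing v₂ with
  | head r =>
    cases h₂ with
    | head => rfl
    | cons hcc _ => exact absurd hcc G.irrefl
  | cons hcx _ ih =>
    cases h₂ with
    | head => exact absurd hcx G.irrefl
    | cons _ h₂ => rw [ih h₂]

theorem comm {c x : V} {u v w : List V} (hxc : x ≠ c) (hc : Extract G c u v)
    (hx : Extract G x u w) : ∃ y, Extract G x v y ∧ Extract G c w y := by
  induction hc generalizing w with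
  | head r =>
    cases hx with
    | head => exact absurd rfl hxc
    | cons _ hx => exact ⟨_, hx, head _⟩
  | cons hcz hc ih =>
    cases hx with
    | head => exact ⟨_, head _, hc⟩
    | cons hxz hx =>
      obtain ⟨y, hxy, hcy⟩ := ih hx
      exact ⟨_, cons hxz hxy, cons hcz hcy⟩

theorem of_swapStep {c : V} {u u' w' : List V} (hs : SwapStep G u u') (he : Extract G c u' w') :
    ∃ w, Extract G c u w ∧ SwapEquiv G w w' := by
  induction hs generalizing w' with
  | swap r hab =>
    rcases he with _ | ⟨hcb, _ | ⟨hca, he⟩⟩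
    · exact ⟨_, cons hab.symm (head _), .refl⟩
    · exact ⟨_, head _, .refl⟩
    · exact ⟨_, cons hca (cons hcb he), .single (.swap _ hab)⟩
  | cons x hs ih =>
    rcases he with _ | ⟨hcx, he⟩
    · exact ⟨_, head _, .single hs⟩
    · obtain ⟨w, hw, hww'⟩ := ih he
      exact ⟨_, cons hcx hw, hww'.cons x⟩

theorem commute_cancel {c : V} {u v₁ v₂ : List V} (he : Extract G c u v₁)
    (hc : Cancel G u v₂) : ∃ z, (Cancel G v₁ z ∨ Extract G c v₁ z) ∧ Extract G c v₂ z := by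
  induction he generalizing v₂ with
  | head r =>
    rcases hc with ⟨he⟩ | ⟨_, hc⟩
    · exact ⟨_, .inr he, head _⟩
    · exact ⟨_, .inl hc, head _⟩
  | @cons x _ _ hcx _ ih =>
    rcases hc with ⟨hx⟩ | ⟨_, hc⟩
    · obtain ⟨y, hxy, hcy⟩ := comm (G.ne_of_adj hcx).symm ‹_› hx
      exact ⟨_, .inl (.head hxy), cons hcx hcy⟩
    · obtain ⟨z, hz | hz, hcz⟩ := ih hc
      · exact ⟨_, .inl (.cons x hz), cons hcx hcz⟩
      · exact ⟨_, .inr (cons hcx hz), cons hcx hcz⟩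

theorem exists_get {c : V} {u v : List V} (h : Extract G c u v) :
    ∃ p : Fin u.length, u.get p = c ∧ ∀ q : Fin u.length, q < p → G.Adj c (u.get q) := by
  induction h with
  | head r => exact ⟨0, rfl, fun q hq => absurd hq (Fin.not_lt_zero q)⟩
  | cons hcx _ ih =>
    obtain ⟨p, hp, hq⟩ := ih
    refine ⟨p.succ, by simpa using hp, Fin.cases (fun _ => hcx) fun q hqp => ?_⟩
    simpa using hq q (by simpa using hqp)

end Extract

namespace Cancel

theorem append_left {u v : List V} (h : Cancel G u v) (l : List V) :
    Cancel G (l ++ u) (l ++ v) := by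
  induction l with
  | nil => exact h
  | cons x l ih => exact cons x ih

theorem of_swapStep {u u' v' : List V} (hs : SwapStep G u u') (hc : Cancel G u' v') :
    ∃ v, Cancel G u v ∧ SwapEquiv G v v' := by
  induction hs generalizing v' with
  | swap r hab =>
    rcases hc with ⟨_ | ⟨_, he⟩⟩ | ⟨_, ⟨he⟩ | ⟨_, hc⟩⟩
    · exact absurd hab G.irrefl
    · exact ⟨_, cons _ (head he), .single (.swap _ hab)⟩
    · exact ⟨_, head (.cons hab he), .single (.swap _ hab)⟩
    · exact ⟨_, cons _ (cons _ hc), .single (.swap _ hab)⟩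
  | cons x hs ih =>
    rcases hc with ⟨he⟩ | ⟨_, hc⟩
    · obtain ⟨w, hw, hww'⟩ := he.of_swapStep hs
      exact ⟨_, head hw, hww'.cons x⟩
    · obtain ⟨v, hv, hvv'⟩ := ih hc
      exact ⟨_, cons x hv, hvv'.cons x⟩

theorem of_swapEquiv {u u' v' : List V} (hs : SwapEquiv G u u') (hc : Cancel G u' v') :
    ∃ v, Cancel G u v ∧ SwapEquiv G v v' := by
  induction hs generalizing v' with
  | refl => exact ⟨v', hc, .refl⟩
  | tail _ hstep ih =>
    obtain ⟨v₁, hv₁, hv₁v'⟩ := of_swapStep hstep hc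
    obtain ⟨v, hv, hvv₁⟩ := ih hv₁
    exact ⟨v, hv, hvv₁.trans hv₁v'⟩

theorem eq_or_exists_cancel {u v₁ v₂ : List V} (h₁ : Cancel G u v₁) (h₂ : Cancel G u v₂) :
    v₁ = v₂ ∨ ∃ z, Cancel G v₁ z ∧ Cancel G v₂ z := by
  induction h₁ generalizing v₂ with
  | head he₁ =>
    rcases h₂ with ⟨he₂⟩ | ⟨_, hc₂⟩
    · exact .inl (by rw [he₁.right_unique he₂])
    · obtain ⟨z, hz, hz₂⟩ := he₁.commute_cancel hc₂
      exact .inr ⟨_, hz.elim (cons _) head, head hz₂⟩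
  | cons x h₁ ih =>
    rcases h₂ with ⟨he₂⟩ | ⟨_, hc₂⟩
    · obtain ⟨z, hz, hz₁⟩ := he₂.commute_cancel h₁
      exact .inr ⟨_, head hz₁, hz.elim (cons _) head⟩
    · rcases ih hc₂ with rfl | ⟨z, hz₁, hz₂⟩
      · exact .inl rfl
      · exact .inr ⟨_, cons x hz₁, cons x hz₂⟩

theorem not_isReducedWord {u v : List V} (h : Cancel G u v) : ¬ IsReducedWord G u := by
  induction h with
  | @head c u _ he =>
    intro hred
    obtain ⟨p, hp, hadj⟩ := he.exists_get
    obtain ⟨q, h0q, hqp, hq⟩ := hred 0 p.succ (by simp) (by simpa using hp.symm)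
    obtain ⟨q, rfl⟩ := Fin.exists_succ_eq.2 (Fin.ne_zero_of_lt (a := 0) h0q)
    exact hq (by simpa using hadj q (by simpa using hqp))
  | cons x _ ih => exact fun hred => ih hred.of_cons

end Cancel

def swapSetoid (G : SimpleGraph V) : Setoid (List V) := ⟨SwapEquiv G, SwapEquiv.equivalence⟩

def CancelMod (G : SimpleGraph V) : Quotient (swapSetoid G) → Quotient (swapSetoid G) → Prop :=
  Relation.Map (Cancel G) (Quotient.mk _) (Quotient.mk _)

theorem cancelMod_diamond {x y z : Quotient (swapSetoid G)} (hy : CancelMod G x y)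
    (hz : CancelMod G x z) : ∃ d, ReflGen (CancelMod G) y d ∧ ReflTransGen (CancelMod G) z d := by
  obtain ⟨u₁, v₁, h₁, rfl, rfl⟩ := hy
  obtain ⟨u₂, v₂, h₂, hu, rfl⟩ := hz
  obtain ⟨v, hv, hvv₂⟩ := h₂.of_swapEquiv (Quotient.exact hu.symm)
  have hv₂ : Quotient.mk (swapSetoid G) v = ⟦v₂⟧ := Quotient.sound hvv₂
  rcases h₁.eq_or_exists_cancel hv with rfl | ⟨z, hz₁, hz⟩
  · exact ⟨_, .refl, by rw [hv₂]⟩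
  · exact ⟨⟦z⟧, .single ⟨_, _, hz₁, rfl, rfl⟩, .single ⟨_, _, hz, hv₂, rfl⟩⟩

theorem join_cancelMod {w w' : List V} (h : WordEquiv G w w') :
    Join (ReflTransGen (CancelMod G)) ⟦w⟧ ⟦w'⟧ := by
  refine ((equivalence_join_reflTransGen fun _ _ _ => cancelMod_diamond).comap
    (Quotient.mk (swapSetoid G))).eqvGen_iff.1 (EqvGen.mono (fun u v hs => ?_) _ _ h)
  cases hs with
  | del l r a => exact ⟨_, .single ⟨_, _, (Cancel.head (.head r)).append_left l, rfl, rfl⟩, .refl⟩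
  | swap l r a b hab =>
    show Join _ ⟦_⟧ ⟦_⟧
    rw [Quotient.sound (s := swapSetoid G) (.single ((SwapStep.swap r hab).append_left l))]
    exact ⟨_, .refl, .refl⟩

theorem not_cancelMod_of_isReducedWord {w : List V} (hw : IsReducedWord G w)
    (y : Quotient (swapSetoid G)) : ¬ CancelMod G ⟦w⟧ y := by
  rintro ⟨u, v, hc, hu, -⟩
  obtain ⟨v', hv', -⟩ := hc.of_swapEquiv (Quotient.exact hu.symm)
  exact hv'.not_isReducedWord hw

theorem swapEquiv_of_isReducedWord {w w' : List V} (h : WordEquiv G w w')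
    (hw : IsReducedWord G w) (hw' : IsReducedWord G w') : SwapEquiv G w w' := by
  obtain ⟨d, hd, hd'⟩ := join_cancelMod h
  have normal {u : List V} (hu : IsReducedWord G u) (hud : ReflTransGen (CancelMod G) ⟦u⟧ d) :
      ⟦u⟧ = d :=
    hud.cases_head.resolve_right fun ⟨_, hstep, _⟩ => not_cancelMod_of_isReducedWord hu _ hstep
  exact Quotient.exact ((normal hw hd).trans (normal hw' hd').symm)

end WordEquiv

section StableRearrangement

variable {α β γ : Type*} [LinearOrder α] [LinearOrder β] {f : α → γ} {g : β → γ}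

theorem nonempty_orderIso_of_natCard_eq [Finite α] [Finite β] (h : Nat.card α = Nat.card β) :
    Nonempty (α ≃o β) := by
  have := Fintype.ofFinite α
  have := Fintype.ofFinite β
  rw [← Fintype.card_eq_nat_card, ← Fintype.card_eq_nat_card] at h
  exact ⟨(Fintype.orderIsoFinOfCardEq α h).symm.trans (Fintype.orderIsoFinOfCardEq β rfl)⟩

theorem ofFiberEquiv_orderIso_apply (E : ∀ c, {a // f a = c} ≃o {b // g b = c}) {c : γ} {a : α}
    (ha : f a = c) : Equiv.ofFiberEquiv (fun c => (E c).toEquiv) a = E c ⟨a, ha⟩ := by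
  subst ha
  rfl

theorem apply_eq_orderIso_of_stable [Finite α] (E : ∀ c, {a // f a = c} ≃o {b // g b = c})
    {e : α ≃ β} (he : ∀ a, g (e a) = f a)
    (hst : ∀ a₁ a₂, a₁ < a₂ → f a₁ = f a₂ → e a₁ < e a₂) {c : γ} {a : α} (ha : f a = c) :
    e a = E c ⟨a, ha⟩ := by
  let e' : {a // f a = c} → {b // g b = c} := fun x => ⟨e x, (he x).trans x.2⟩
  have hmono : StrictMono e' := fun x y hxy => hst x y hxy (x.2.trans y.2.symm)
  have hsurj : Function.Surjective e' := fun y =>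
    ⟨⟨e.symm y, by rw [← he, e.apply_symm_apply, y.2]⟩, Subtype.ext (e.apply_symm_apply y)⟩
  exact congrArg Subtype.val
    (DFunLike.congr_fun (Subsingleton.elim (hmono.orderIsoOfSurjective e' hsurj) (E c)) ⟨a, ha⟩)

theorem existsUnique_stable_rearrangement [Finite α] [Finite β]
    (hcard : ∀ c, Nat.card {a // f a = c} = Nat.card {b // g b = c}) :
    ∃! σ : β ≃ α, (∀ b, g b = f (σ b)) ∧
      ∀ a₁ a₂, a₁ < a₂ → f a₁ = f a₂ → σ.symm a₁ < σ.symm a₂ := by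
  have E c := (nonempty_orderIso_of_natCard_eq (hcard c)).some
  set e := Equiv.ofFiberEquiv fun c => (E c).toEquiv
  refine ⟨e.symm, ⟨fun b => ?_, fun a₁ a₂ h₁₂ hf => ?_⟩, fun σ ⟨hσ, hst⟩ => ?_⟩
  · rw [← Equiv.ofFiberEquiv_map (fun c => (E c).toEquiv) (e.symm b), Equiv.apply_symm_apply]
  · rw [Equiv.symm_symm, ofFiberEquiv_orderIso_apply E hf, ofFiberEquiv_orderIso_apply E rfl]
    exact (E _).strictMono h₁₂
  · refine Equiv.symm_bijective.injective (Equiv.ext fun a => ?_)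
    rw [Equiv.symm_symm, ofFiberEquiv_orderIso_apply E rfl]
    exact apply_eq_orderIso_of_stable E (fun a => by simpa using hσ (σ.symm a)) hst rfl

end StableRearrangement

theorem List.natCard_get_eq_count {V : Type*} [DecidableEq V] (l : List V) (c : V) :
    Nat.card {i : Fin l.length // l.get i = c} = l.count c := by
  rw [Nat.card_eq_fintype_card, Fintype.card_subtype]
  exact Fin.card_filter_univ_eq_vector_get_eq_count c ⟨l, rfl⟩

/-- If two reduced words `w` and `w'` are equivalent, then they have the same
length and there is a unique permutation `σ` with `w'_i = w_{σ(i)}` for all `i`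
which moreover preserves the relative order of equal letters: whenever
`w_k = w_l` with `k < l`, then `σ⁻¹(k) < σ⁻¹(l)`. -/
theorem equiv_reduced_unique_perm {V : Type*} (G : SimpleGraph V)
    (w w' : List V) (hw : IsReducedWord G w) (hw' : IsReducedWord G w')
    (h : WordEquiv G w w') :
    ∃ hlen : w.length = w'.length,
      ∃! σ : Equiv.Perm (Fin w.length),
        (∀ i : Fin w.length, w'.get (Fin.cast hlen i) = w.get (σ i)) ∧
        (∀ k l : Fin w.length, (k : ℕ) < (l : ℕ) → w.get k = w.get l →
          ((σ.symm k : Fin w.length) : ℕ) < ((σ.symm l : Fin w.length) : ℕ)) := by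
  classical
  have hperm := (h.swapEquiv_of_isReducedWord hw hw').perm
  have hlen := hperm.length_eq
  refine ⟨hlen, existsUnique_stable_rearrangement (f := w.get)
    (g := fun i => w'.get (Fin.cast hlen i)) fun c => ?_⟩
  calc Nat.card {i // w.get i = c}
      = w'.count c := by rw [w.natCard_get_eq_count, hperm.count_eq]
    _ = Nat.card {i : Fin w.length // w'.get (Fin.cast hlen i) = c} := by
      rw [← w'.natCard_get_eq_count]
      exact Nat.card_congr ((finCongr hlen).subtypeEquiv fun _ => Iff.rfl).symm
end

section
/- Fix a vertex v_0 of a simplicial graph Γ and a reduced word x containing v_0. If x admits a decomposition x = y·c·(v_0)·b in standard form with respect to v_0, then the words y, c, and b are uniquely determined by x. -/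
open Classical in
/-- The (right-hand) non-commutative length of a word `w` with respect to a
vertex `v₀`: if `w` is equivalent to a word ending in `v₀`, it is the number of
letters of `w` not adjacent to `v₀`, minus one (discounting the final `v₀`);
otherwise it is `-1`. -/
noncomputable def ncLength {V : Type*} (G : SimpleGraph V) (v₀ : V) (w : List V) : ℤ :=
  if ∃ u : List V, WordEquiv G w (u ++ [v₀]) then
    (w.countP (fun v => decide (¬ G.Adj v v₀)) : ℤ) - 1
  else -1

/-- One truncation step: pass to an equivalent rearrangement and delete its
first or last letter. -/
def TruncStep {V : Type*} (G : SimpleGraph V) (x y : List V) : Prop :=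
  ∃ z : List V, WordEquiv G x z ∧ (y = z.tail ∨ y = z.dropLast)

/-- The truncation order: `Preceq G y x` means `y ≼ x`, i.e. `y` is obtained
from `x` by iterated truncations of equivalent rearrangements. -/
def Preceq {V : Type*} (G : SimpleGraph V) (y x : List V) : Prop :=
  Relation.ReflTransGen (TruncStep G) x y

/-- The non-commutative length (with respect to `v₀`) of the downward closure
`{x}^≼` of a word `x` under the truncation order. -/
noncomputable def ncLengthCl {V : Type*} (G : SimpleGraph V) (v₀ : V) (x : List V) : ℤ :=
  sSup {n : ℤ | ∃ y : List V, Preceq G y x ∧ ncLength G v₀ y = n}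

/-- The decomposition `x = y ++ c ++ (v₀) ++ b` is in standard form with
respect to `v₀`: `b` is of smallest length among decompositions with
`y·c·(v₀) ≼ x` and `⦀y·c·(v₀)⦀_{v₀} = ⦀{x}^≼⦀_{v₀}`, and `y` is of smallest
length with `y·(v₀) ≼ x` and `⦀y·(v₀)⦀_{v₀} = ⦀{x}^≼⦀_{v₀}`. -/
def StandardForm {V : Type*} (G : SimpleGraph V) (v₀ : V) (x y c b : List V) : Prop :=
  x = y ++ c ++ v₀ :: b ∧
  Preceq G (y ++ c ++ [v₀]) x ∧
  ncLength G v₀ (y ++ c ++ [v₀]) = ncLengthCl G v₀ x ∧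
  (∀ y' c' b' : List V, x = y' ++ c' ++ v₀ :: b' →
    Preceq G (y' ++ c' ++ [v₀]) x →
    ncLength G v₀ (y' ++ c' ++ [v₀]) = ncLengthCl G v₀ x →
    b.length ≤ b'.length) ∧
  Preceq G (y ++ [v₀]) x ∧
  ncLength G v₀ (y ++ [v₀]) = ncLengthCl G v₀ x ∧
  (∀ y' : List V, Preceq G (y' ++ [v₀]) x →
    ncLength G v₀ (y' ++ [v₀]) = ncLengthCl G v₀ x →
    y.length ≤ y'.length)

/-- Uniqueness of the standard form: if a reduced word `x` containing `v₀`
admits decompositions `x = y·c·(v₀)·b` and `x = y'·c'·(v₀)·b'` both in standard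
form with respect to `v₀`, then `y = y'`, `c = c'` and `b = b'`. -/
theorem standardForm_unique {V : Type*} (G : SimpleGraph V) (v₀ : V)
    (x : List V) (hx : IsReducedWord G x) (hv : v₀ ∈ x)
    (y c b y' c' b' : List V)
    (h : StandardForm G v₀ x y c b) (h' : StandardForm G v₀ x y' c' b') :
    y = y' ∧ c = c' ∧ b = b' := by
  obtain ⟨hxe, hp, hn, hbmin, hpy, hny, hymin⟩ := h
  obtain ⟨hxe', hp', hn', hbmin', hpy', hny', hymin'⟩ := h'
  have hb : b.length = b'.length :=
    le_antisymm (hbmin y' c' b' hxe' hp' hn') (hbmin' y c b hxe hp hn)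
  have hy : y.length = y'.length :=
    le_antisymm (hymin y' hpy' hny') (hymin' y hpy hny)
  have hyeq : y = y' := by
    have h1 : y <+: x := ⟨c ++ v₀ :: b, by simp [hxe]⟩
    have h2 : y' <+: x := ⟨c' ++ v₀ :: b', by simp [hxe']⟩
    exact (List.prefix_of_prefix_length_le h1 h2 hy.le).eq_of_length hy
  have hbeq : b = b' := by
    have h1 : b <:+ x := ⟨y ++ c ++ [v₀], by simp [hxe]⟩
    have h2 : b' <:+ x := ⟨y' ++ c' ++ [v₀], by simp [hxe']⟩
    exact ((List.suffix_of_suffix_length_le h2 h1 hb.ge).eq_of_length hb.symm).symm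
  refine ⟨hyeq, ?_, hbeq⟩
  subst hyeq hbeq
  have heq : y ++ c ++ v₀ :: b = y ++ c' ++ v₀ :: b := hxe.symm.trans hxe'
  simp only [List.append_assoc, List.append_cancel_left_eq] at heq
  exact List.append_cancel_right heq
end

section
/- Let x and y be reduced words over the vertex set of a simplicial graph. If the concatenation of the reversal of x with y is not reduced, then x has an equivalent rearrangement beginning with some vertex v and y has an equivalent rearrangement beginning with the same vertex v. -/
/-!
A word fails to be reduced exactly when it contains a factor `v u₁ ⋯ uₖ v` with `v` adjacent to
every `uᵢ`. Since `x.reverse` and `y` are reduced, in `x.reverse ++ y` the two copies of `v`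
sit on opposite sides of the junction, so `x = uᵢ ⋯ u₁ v ⋯` and `y = uᵢ₊₁ ⋯ uₖ v ⋯`; in both,
`v` commutes past the preceding letters to the front.
-/

lemma List.eq_take_append_cons_append_cons {α : Type*} (w : List α) {k l : ℕ} (hkl : k < l)
    (hl : l < w.length) :
    w = w.take k ++ w[k] :: (w.take l).drop (k + 1) ++ w[l] :: w.drop (l + 1) := by
  conv_lhs => rw [← List.take_append_drop l w, ← List.take_append_drop k (w.take l),
    List.drop_eq_getElem_cons (by simp; omega), List.drop_eq_getElem_cons hl]
  simp [List.take_take, min_eq_left hkl.le]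

lemma List.append_eq_append_cons_iff {α : Type*} {p q a t : List α} {v : α} :
    p ++ q = a ++ v :: t ↔
      (∃ a', a = p ++ a' ∧ q = a' ++ v :: t) ∨ ∃ t', p = a ++ v :: t' ∧ t = t' ++ q := by
  rw [List.append_eq_append_iff]
  constructor
  · rintro (h | ⟨_ | ⟨u, t'⟩, rfl, h⟩)
    · exact .inl h
    · exact .inl ⟨[], by simpa using h.symm⟩
    · simp only [List.cons_append, List.cons.injEq] at h
      obtain ⟨rfl, rfl⟩ := h
      exact .inr ⟨t', rfl, rfl⟩
  · rintro (h | ⟨t', rfl, rfl⟩)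
    · exact .inl h
    · exact .inr ⟨v :: t', rfl, rfl⟩

lemma List.append_eq_append_cons_append_cons_cases {α : Type*} {p q a b c : List α} {v : α}
    (h : p ++ q = a ++ v :: b ++ v :: c) :
    (∃ c', p = a ++ v :: b ++ v :: c') ∨ (∃ a', q = a' ++ v :: b ++ v :: c) ∨
      ∃ b₁ b₂, b = b₁ ++ b₂ ∧ p = a ++ v :: b₁ ∧ q = b₂ ++ v :: c := by
  rw [List.append_assoc, List.cons_append, List.append_eq_append_cons_iff] at h
  rcases h with ⟨a', -, hq⟩ | ⟨t, rfl, ht⟩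
  · exact .inr (.inl ⟨a', by simpa using hq⟩)
  rcases List.append_eq_append_cons_iff.1 ht.symm with ⟨b₂, rfl, hq⟩ | ⟨c', rfl, -⟩
  · exact .inr (.inr ⟨t, b₂, rfl, rfl, hq⟩)
  · exact .inl ⟨c', by simp⟩

open Relation

section

variable {V : Type*} {G : SimpleGraph V}

lemma WordStep.cons {l₁ l₂ : List V} (a : V) (h : WordStep G l₁ l₂) :
    WordStep G (a :: l₁) (a :: l₂) := by
  cases h with
  | del l r b => exact .del (a :: l) r b
  | swap l r b c hbc => exact .swap (a :: l) r b c hbc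

lemma reflTransGen_wordStep_append_cons {v : V} {l : List V} (r : List V)
    (hadj : ∀ u ∈ l, G.Adj v u) :
    ReflTransGen (WordStep G) (l ++ v :: r) (v :: (l ++ r)) := by
  induction l with
  | nil => exact .refl
  | cons a l ih =>
    have hl : ReflTransGen (WordStep G) (a :: (l ++ v :: r)) (a :: v :: (l ++ r)) :=
      (ih fun u hu => hadj u (List.mem_cons_of_mem a hu)).lift (a :: ·) fun _ _ => .cons a
    exact hl.tail (.swap [] (l ++ r) a v (hadj a List.mem_cons_self).symm)

lemma wordEquiv_append_cons {v : V} {l : List V} (r : List V) (hadj : ∀ u ∈ l, G.Adj v u) :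
    WordEquiv G (l ++ v :: r) (v :: (l ++ r)) :=
  EqvGen.reflTransGen_le_eqvGen _ _ _ (reflTransGen_wordStep_append_cons r hadj)

lemma exists_eq_append_cons_append_cons_of_not_isReducedWord {w : List V}
    (h : ¬ IsReducedWord G w) :
    ∃ (a b c : List V) (v : V), w = a ++ v :: b ++ v :: c ∧ ∀ u ∈ b, G.Adj v u := by
  simp only [IsReducedWord, List.get_eq_getElem, not_forall, not_exists, not_and, not_not] at h
  obtain ⟨⟨k, hk⟩, ⟨l, hl⟩, hkl, heq, hadj⟩ := h
  refine ⟨w.take k, (w.take l).drop (k + 1), w.drop (l + 1), w[k], ?_, fun u hu => ?_⟩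
  · simpa only [heq] using w.eq_take_append_cons_append_cons hkl hl
  · obtain ⟨i, hi, rfl⟩ := List.getElem_of_mem hu
    simp only [List.length_drop, List.length_take] at hi
    simpa [List.getElem_take, List.getElem_drop] using
      hadj ⟨k + 1 + i, by omega⟩ (by simp; omega) (by simp; omega)

lemma not_isReducedWord_append_cons_append_cons {a b c : List V} {v : V}
    (hb : ∀ u ∈ b, G.Adj v u) : ¬ IsReducedWord G (a ++ v :: b ++ v :: c) := by
  intro h
  have hlen : (a ++ v :: b ++ v :: c).length = a.length + b.length + c.length + 2 := by
    simp; omega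
  have hfirst : (a ++ v :: b ++ v :: c)[a.length]'(by omega) = v := by simp
  have hsecond : (a ++ v :: b ++ v :: c)[a.length + b.length + 1]'(by omega) = v := by
    rw [List.getElem_append_right (by simp; omega)]; simp
  obtain ⟨⟨p, hp⟩, hkp, hpl, hnadj⟩ := h ⟨a.length, by omega⟩ ⟨a.length + b.length + 1, by omega⟩
    (by simp) (by simp only [List.get_eq_getElem, hfirst, hsecond])
  simp only [List.get_eq_getElem, hfirst] at hkp hpl hnadj
  obtain ⟨i, rfl⟩ : ∃ i, p = a.length + 1 + i := ⟨p - a.length - 1, by omega⟩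
  have hmid : (a ++ v :: b ++ v :: c)[a.length + 1 + i] = b[i]'(by omega) := by
    rw [List.getElem_append_left (by simp; omega), List.getElem_append_right (by omega)]
    simp [show a.length + 1 + i - a.length = i + 1 by omega]
  exact hnadj (hmid ▸ hb _ (List.getElem_mem _))

lemma IsReducedWord.reverse {w : List V} (h : IsReducedWord G w) :
    IsReducedWord G w.reverse := by
  by_contra hw
  obtain ⟨a, b, c, v, hrev, hb⟩ := exists_eq_append_cons_append_cons_of_not_isReducedWord hw
  have hw : w = c.reverse ++ v :: b.reverse ++ v :: a.reverse := by
    simpa using congrArg List.reverse hrev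
  exact not_isReducedWord_append_cons_append_cons (a := c.reverse) (c := a.reverse)
    (fun u hu => hb u (List.mem_reverse.1 hu)) (hw ▸ h)

end

/-- If `x` and `y` are reduced words and the concatenation of the reversal of
`x` with `y` is not reduced, then `x` and `y` admit equivalent rearrangements
beginning with a common vertex. -/
theorem not_reduced_concat_common_first_letter {V : Type*} (G : SimpleGraph V)
    (x y : List V) (hx : IsReducedWord G x) (hy : IsReducedWord G y)
    (h : ¬ IsReducedWord G (x.reverse ++ y)) :
    ∃ (v : V) (x₂ y₂ : List V), WordEquiv G x (v :: x₂) ∧ WordEquiv G y (v :: y₂) := by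
  obtain ⟨a, b, c, v, hxy, hb⟩ := exists_eq_append_cons_append_cons_of_not_isReducedWord h
  rcases List.append_eq_append_cons_append_cons_cases hxy with
    ⟨c', hx'⟩ | ⟨a', hy'⟩ | ⟨b₁, b₂, rfl, hx', rfl⟩
  · exact absurd hx.reverse (hx' ▸ not_isReducedWord_append_cons_append_cons hb)
  · exact absurd hy (hy' ▸ not_isReducedWord_append_cons_append_cons hb)
  · have hx_eq : x = b₁.reverse ++ v :: a.reverse := by
      simpa using congrArg List.reverse hx'
    refine ⟨v, b₁.reverse ++ a.reverse, b₂ ++ c, hx_eq ▸ wordEquiv_append_cons _ ?_,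
      wordEquiv_append_cons _ fun u hu => hb u (List.mem_append_right _ hu)⟩
    exact fun u hu => hb u (List.mem_append_left _ (List.mem_reverse.1 hu))
end

section
/- Uniqueness of graph-independent joint distribution: let (A, φ) be a non-commutative probability space, Γ = (V,E) a graph, and {A_v}_{v ∈ V} a Γ-independent family of unital C*-subalgebras of A. Then the restriction of φ to the C*-algebra B generated by all the A_v is uniquely determined by the restrictions φ|_{A_v}. -/
open scoped ComplexOrder

/-- Swapping two adjacent letters whose vertices are joined by an edge, for
words whose letters are elements of the vertex algebras. -/
inductive LetterSwap {V : Type*} {A : V → Type*} (G : SimpleGraph V) :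
    List (Σ v, A v) → List (Σ v, A v) → Prop
  | swap (l r : List (Σ v, A v)) (p q : Σ v, A v) (h : G.Adj p.1 q.1) :
      LetterSwap G (l ++ p :: q :: r) (l ++ q :: p :: r)

/-- Equivalent rearrangements of words of algebra letters. -/
def LetterEquiv {V : Type*} {A : V → Type*} (G : SimpleGraph V) :
    List (Σ v, A v) → List (Σ v, A v) → Prop :=
  Relation.EqvGen (LetterSwap G)

/-- The element of the graph product determined by a word of letters. -/
noncomputable def wordElem {V : Type*} {A : V → Type*} [∀ v, CStarAlgebra (A v)]
    {P : Type*} [CStarAlgebra P] (ι : ∀ v, A v →⋆ₐ[ℂ] P)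
    (w : List (Σ v, A v)) : P :=
  (w.map fun p => ι p.1 p.2).prod

/-- A word of letters is reduced (with respect to the states `φ`): its word of
vertices is reduced and every letter lies in the kernel of the corresponding
state. -/
def IsReducedAlgWord {V : Type*} {A : V → Type*} [∀ v, CStarAlgebra (A v)]
    (G : SimpleGraph V) (φ : ∀ v, A v →ₗ[ℂ] ℂ) (w : List (Σ v, A v)) : Prop :=
  IsReducedWord G (w.map Sigma.fst) ∧ ∀ p ∈ w, φ p.1 p.2 = 0

/-- A finite set of words of letters is complete: it contains the unit (the
empty word) and is closed under left and right truncations of all equivalent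
rearrangements of its members. -/
def IsCompleteSet {V : Type*} {A : V → Type*} (G : SimpleGraph V)
    (X : Finset (List (Σ v, A v))) : Prop :=
  ([] : List (Σ v, A v)) ∈ X ∧
    ∀ w ∈ X, ∀ w' : List (Σ v, A v), LetterEquiv G w w' →
      w'.tail ∈ X ∧ w'.dropLast ∈ X

/-- A family of unital C*-subalgebras `S v` of a non-commutative probability
space `(A, φ)` is `Γ`-independent: algebras at adjacent vertices commute, and
`φ` vanishes on every element `a₁ ⋯ a_m` reduced with respect to `φ`
(each `a_j ∈ S v_j` with `φ(a_j) = 0` and `(v_1, …, v_m)` a reduced word). -/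
def GammaIndep {V : Type*} (G : SimpleGraph V) {A : Type*} [CStarAlgebra A]
    (φ : A → ℂ) (S : V → StarSubalgebra ℂ A) : Prop :=
  (∀ v w, G.Adj v w → ∀ a ∈ S v, ∀ b ∈ S w, a * b = b * a) ∧
  ∀ l : List (V × A), IsReducedWord G (l.map Prod.fst) → l ≠ [] →
    (∀ p ∈ l, p.2 ∈ S p.1 ∧ φ p.2 = 0) →
    φ (l.map Prod.snd).prod = 0

/-!
Writing a letter `a` as `(a - φ a • 1) + φ a • 1` turns a product of letters into a product of
`φ`-centred letters plus scalar multiples of shorter products, and since `φ` and `ψ` agree on the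
`S v`, centred letters are centred for `ψ` as well. A centred product is either reduced, and then
both states vanish on it, or it contains two letters from the same vertex separated only by letters
from adjacent vertices; these commute, so the two letters merge into one and the word gets shorter.
By induction on the length, `φ` and `ψ` agree on all products of letters, hence by linearity and
continuity on the closure of their span, the C*-algebra generated by the `S v`.
-/

theorem exists_eq_append_of_not_isReducedWord {V α : Type*} {G : SimpleGraph V} {f : α → V}
    {l : List α} (h : ¬ IsReducedWord G (l.map f)) :
    ∃ u a mid b t, l = u ++ a :: (mid ++ b :: t) ∧ f a = f b ∧ ∀ q ∈ mid, G.Adj (f a) (f q) := by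
  simp only [IsReducedWord, not_forall, not_exists, not_and, not_not] at h
  obtain ⟨⟨k, hk⟩, ⟨j, hj⟩, hkj, hfkj, hadj⟩ := h
  simp only [List.length_map] at hk hj
  dsimp only at hkj
  refine ⟨l.take k, l[k], (l.drop (k + 1)).take (j - k - 1), l[j], l.drop (j + 1), ?_, ?_, ?_⟩
  · have hdrop : (l.drop (k + 1)).drop (j - k - 1) = l.drop j := by
      rw [List.drop_drop]; congr 1; omega
    rw [← List.drop_eq_getElem_cons hj, ← hdrop, List.take_append_drop,
      ← List.drop_eq_getElem_cons hk, List.take_append_drop]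
  · simpa using hfkj
  · intro q hq
    obtain ⟨i, hi, rfl⟩ := List.mem_iff_getElem.mp hq
    simp only [List.length_take, List.length_drop] at hi
    simpa using hadj ⟨k + 1 + i, by simp; omega⟩ (by simp; omega) (by simp; omega)

theorem List.prod_append_cons_append_cons_of_commute {M : Type*} [Monoid M]
    (u mid t : List M) {a : M} (b : M) (h : ∀ x ∈ mid, Commute a x) :
    (u ++ a :: (mid ++ b :: t)).prod = (u ++ (mid ++ (a * b) :: t)).prod := by
  simp only [List.prod_append, List.prod_cons, ← mul_assoc,
    (Commute.list_prod_right mid a h).eq]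

theorem List.prod_append_cons_eq_add_smul {R A : Type*} [CommRing R] [Ring A] [Algebra R A]
    (u t : List A) (x : A) (c : R) :
    (u ++ x :: t).prod = (u ++ (x - c • 1) :: t).prod + c • (u ++ t).prod := by
  simp only [List.prod_append, List.prod_cons, sub_mul, mul_sub, smul_mul_assoc, one_mul,
    mul_smul_comm]
  abel

section GraphIndependence

variable {𝕜 V A : Type*} [CommRing 𝕜] [Ring A] [Algebra 𝕜 A]
  {G : SimpleGraph V} {S : V → Subalgebra 𝕜 A} {φ ψ : A →ₗ[𝕜] 𝕜}

variable (G S) in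
def VanishesOnReducedWords (φ : A →ₗ[𝕜] 𝕜) : Prop :=
  ∀ l : List (V × A), IsReducedWord G (l.map Prod.fst) → l ≠ [] →
    (∀ p ∈ l, p.2 ∈ S p.1 ∧ φ p.2 = 0) → φ (l.map Prod.snd).prod = 0

theorem map_prod_eq_of_centered
    (hcomm : ∀ v w, G.Adj v w → ∀ a ∈ S v, ∀ b ∈ S w, a * b = b * a)
    (hφ1 : φ 1 = 1) (hψ1 : ψ 1 = 1)
    (hφ : VanishesOnReducedWords G S φ) (hψ : VanishesOnReducedWords G S ψ)
    (hagree : ∀ v, ∀ a ∈ S v, φ a = ψ a) {l : List (V × A)}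
    (hl : ∀ p ∈ l, p.2 ∈ S p.1) (hcentered : ∀ p ∈ l, φ p.2 = 0)
    (hshorter : ∀ l' : List (V × A), (∀ p ∈ l', p.2 ∈ S p.1) → l'.length < l.length →
      φ (l'.map Prod.snd).prod = ψ (l'.map Prod.snd).prod) :
    φ (l.map Prod.snd).prod = ψ (l.map Prod.snd).prod := by
  rcases eq_or_ne l [] with rfl | hne
  · simp [hφ1, hψ1]
  by_cases hred : IsReducedWord G (l.map Prod.fst)
  · have hψcentered : ∀ p ∈ l, ψ p.2 = 0 := fun p hp => by
      rw [← hagree _ _ (hl p hp)]; exact hcentered p hp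
    rw [hφ l hred hne fun p hp => ⟨hl p hp, hcentered p hp⟩,
      hψ l hred hne fun p hp => ⟨hl p hp, hψcentered p hp⟩]
  obtain ⟨u, a, mid, b, t, rfl, hab, hadj⟩ := exists_eq_append_of_not_isReducedWord hred
  have hmerge : ((u ++ a :: (mid ++ b :: t)).map Prod.snd).prod =
      ((u ++ (mid ++ (a.1, a.2 * b.2) :: t)).map Prod.snd).prod := by
    simp only [List.map_append, List.map_cons]
    refine List.prod_append_cons_append_cons_of_commute _ _ _ _ fun x hx => ?_
    obtain ⟨q, hq, rfl⟩ := List.mem_map.mp hx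
    exact hcomm _ _ (hadj q hq) _ (hl a (by simp)) _ (hl q (by simp [hq]))
  have hl' : ∀ p ∈ u ++ (mid ++ (a.1, a.2 * b.2) :: t), p.2 ∈ S p.1 := by
    have hb : b.2 ∈ S a.1 := hab ▸ hl b (by simp)
    simp only [List.mem_append, List.mem_cons]
    rintro p (hp | hp | rfl | hp)
    exacts [hl p (by simp [hp]), hl p (by simp [hp]), mul_mem (hl a (by simp)) hb,
      hl p (by simp [hp])]
  rw [hmerge]
  exact hshorter _ hl' (by simp)

theorem map_prod_eq_of_forall_centered (hφ1 : φ 1 = 1) {n : ℕ}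
    (hshorter : ∀ l : List (V × A), (∀ p ∈ l, p.2 ∈ S p.1) → l.length < n →
      φ (l.map Prod.snd).prod = ψ (l.map Prod.snd).prod)
    (hcentered : ∀ l : List (V × A), (∀ p ∈ l, p.2 ∈ S p.1) → (∀ p ∈ l, φ p.2 = 0) →
      l.length = n → φ (l.map Prod.snd).prod = ψ (l.map Prod.snd).prod)
    (l : List (V × A)) (hl : ∀ p ∈ l, p.2 ∈ S p.1) (hn : l.length = n) :
    φ (l.map Prod.snd).prod = ψ (l.map Prod.snd).prod := by
  suffices h : ∀ t u : List (V × A), (∀ p ∈ u, p.2 ∈ S p.1 ∧ φ p.2 = 0) →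
      (∀ p ∈ t, p.2 ∈ S p.1) → (u ++ t).length = n →
      φ ((u ++ t).map Prod.snd).prod = ψ ((u ++ t).map Prod.snd).prod from
    h l [] (by simp) hl hn
  intro t
  induction t with
  | nil =>
    intro u hu _ hn
    simpa using
      hcentered u (fun p hp => (hu p hp).1) (fun p hp => (hu p hp).2) (by simpa using hn)
  | cons p t ih =>
    intro u hu hpt hn
    set c := φ p.2
    have hp : p.2 - c • 1 ∈ S p.1 :=
      sub_mem (hpt p (by simp)) (Subalgebra.smul_mem _ (one_mem _) c)
    have hu' : ∀ q ∈ u ++ [(p.1, p.2 - c • 1)], q.2 ∈ S q.1 ∧ φ q.2 = 0 := by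
      simp only [List.mem_append, List.mem_singleton]
      rintro q (hq | rfl)
      · exact hu q hq
      · exact ⟨hp, by simp [c, hφ1]⟩
    have hsplit : ((u ++ p :: t).map Prod.snd).prod =
        (((u ++ [(p.1, p.2 - c • 1)]) ++ t).map Prod.snd).prod +
          c • ((u ++ t).map Prod.snd).prod := by
      simpa using List.prod_append_cons_eq_add_smul (u.map Prod.snd) (t.map Prod.snd) p.2 c
    have hut : ∀ q ∈ u ++ t, q.2 ∈ S q.1 := by
      simp only [List.mem_append]
      rintro q (hq | hq)
      exacts [(hu q hq).1, hpt q (by simp [hq])]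
    rw [hsplit, map_add, map_add, map_smul, map_smul,
      ih _ hu' (fun q hq => hpt q (by simp [hq])) (by simpa using hn),
      hshorter _ hut (by simp only [List.length_append, List.length_cons] at hn ⊢; omega)]

theorem map_prod_eq_of_vanishesOnReducedWords
    (hcomm : ∀ v w, G.Adj v w → ∀ a ∈ S v, ∀ b ∈ S w, a * b = b * a)
    (hφ1 : φ 1 = 1) (hψ1 : ψ 1 = 1)
    (hφ : VanishesOnReducedWords G S φ) (hψ : VanishesOnReducedWords G S ψ)
    (hagree : ∀ v, ∀ a ∈ S v, φ a = ψ a) (l : List (V × A)) (hl : ∀ p ∈ l, p.2 ∈ S p.1) :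
    φ (l.map Prod.snd).prod = ψ (l.map Prod.snd).prod := by
  induction hn : l.length using Nat.strong_induction_on generalizing l with
  | _ n ih =>
    have hshorter : ∀ l' : List (V × A), (∀ p ∈ l', p.2 ∈ S p.1) → l'.length < n →
        φ (l'.map Prod.snd).prod = ψ (l'.map Prod.snd).prod :=
      fun l' hl' hlt => ih _ hlt l' hl' rfl
    refine map_prod_eq_of_forall_centered hφ1 hshorter (fun l' hl' hc hlen => ?_) l hl hn
    exact map_prod_eq_of_centered hcomm hφ1 hψ1 hφ hψ hagree hl' hc (hlen ▸ hshorter)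

end GraphIndependence

theorem StarSubalgebra.exists_list_prod_eq_of_mem_closure {R V A : Type*} [CommSemiring R]
    [StarRing R] [Semiring A] [StarRing A] [Algebra R A] [StarModule R A]
    (S : V → StarSubalgebra R A) {x : A}
    (hx : x ∈ Submonoid.closure ((⋃ v, (S v : Set A)) ∪ star (⋃ v, (S v : Set A)))) :
    ∃ l : List (V × A), (∀ p ∈ l, p.2 ∈ S p.1) ∧ (l.map Prod.snd).prod = x := by
  induction hx using Submonoid.closure_induction with
  | mem y hy =>
    obtain ⟨v, hv⟩ : ∃ v, y ∈ S v := by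
      rcases hy with hy | hy
      · exact Set.mem_iUnion.mp hy
      · obtain ⟨v, hv⟩ := Set.mem_iUnion.mp (Set.mem_star.mp hy)
        exact ⟨v, by simpa using star_mem hv⟩
    exact ⟨[(v, y)], by simpa using hv, by simp⟩
  | one => exact ⟨[], by simp, by simp⟩
  | mul y z _ _ hy hz =>
    obtain ⟨l, hl, rfl⟩ := hy
    obtain ⟨l', hl', rfl⟩ := hz
    refine ⟨l ++ l', fun p hp => ?_, by simp⟩
    rcases List.mem_append.mp hp with hp | hp
    exacts [hl p hp, hl' p hp]

theorem gammaIndep_state_unique_general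
    {V : Type*} (G : SimpleGraph V) {A : Type*} [CStarAlgebra A]
    (S : V → StarSubalgebra ℂ A)
    (φ ψ : A →L[ℂ] ℂ)
    (hφ1 : φ 1 = 1)
    (hψ1 : ψ 1 = 1)
    (hφind : GammaIndep G (φ : A → ℂ) S) (hψind : GammaIndep G (ψ : A → ℂ) S)
    (hagree : ∀ v, ∀ a ∈ S v, φ a = ψ a) :
    ∀ b ∈ (StarAlgebra.adjoin ℂ (⋃ v, (S v : Set A))).topologicalClosure,
      φ b = ψ b := by
  have hadjoin : Set.EqOn φ ψ (StarAlgebra.adjoin ℂ (⋃ v, (S v : Set A))) := by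
    intro x hx
    have hspan : x ∈ Submodule.span ℂ (Submonoid.closure
        ((⋃ v, (S v : Set A)) ∪ star (⋃ v, (S v : Set A))) : Set A) := by
      rw [← StarAlgebra.adjoin_eq_span]; exact hx
    refine LinearMap.eqOn_span (f := (φ : A →ₗ[ℂ] ℂ)) (g := ψ) (fun y hy => ?_) hspan
    obtain ⟨l, hl, rfl⟩ := StarSubalgebra.exists_list_prod_eq_of_mem_closure S hy
    exact map_prod_eq_of_vanishesOnReducedWords (S := fun v => (S v).toSubalgebra)
      hφind.1 hφ1 hψ1 hφind.2 hψind.2 hagree l hl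
  intro b hb
  exact closure_minimal hadjoin (isClosed_eq φ.continuous ψ.continuous) hb

/-- **Uniqueness of the graph-independent joint distribution**: if `{S v}` is a
`Γ`-independent family of unital C*-subalgebras with respect to each of the
states `φ` and `ψ`, and `φ` and `ψ` agree on every `S v`, then they agree on
the C*-algebra generated by all the `S v`.  In particular `φ` restricted to the
generated C*-algebra is uniquely determined by its restrictions to the `S v`. -/
theorem gammaIndep_state_unique
    {V : Type*} (G : SimpleGraph V) {A : Type*} [CStarAlgebra A]
    (S : V → StarSubalgebra ℂ A) (hSclosed : ∀ v, IsClosed (S v : Set A))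
    (φ ψ : A →L[ℂ] ℂ)
    (hφ1 : φ 1 = 1) (hφpos : ∀ a : A, 0 ≤ φ (star a * a))
    (hψ1 : ψ 1 = 1) (hψpos : ∀ a : A, 0 ≤ ψ (star a * a))
    (hφind : GammaIndep G (φ : A → ℂ) S) (hψind : GammaIndep G (ψ : A → ℂ) S)
    (hagree : ∀ v, ∀ a ∈ S v, φ a = ψ a) :
    ∀ b ∈ (StarAlgebra.adjoin ℂ (⋃ v, (S v : Set A))).topologicalClosure,
      φ b = ψ b :=
  gammaIndep_state_unique_general G S φ ψ hφ1 hψ1 hφind hψind hagree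
end
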